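/- arXiv:2107.12231 — 2 statements merged into one kernel-verified Lean document; each statement's English description precedes it below -/
import Mathlib

section
/- Let k be an algebraically closed field and let u0, …, uN be homogeneous polynomials in k[X,Y] with deg(u_i) = n·λ_i for positive integers n and λ_0,…,λ_N. Suppose the associated rational map to weighted projective space is constant, i.e., for all points p, q of P^1 at which not all u_i vanish and all indices i, j, we have u_i(p)^{λ_j}·u_j(q)^{λ_i} = u_j(p)^{λ_i}·u_i(q)^{λ_j}. Let I be the set of indices with u_i ≠ 0 and ℓ = gcd(λ_i : i ∈ I). Then there exist scalars a_i ∈ k and a homogeneous polynomial U of degree ℓ·n such that u_i = a_i·U^{λ_i/ℓ} for all i ∈ I. -/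
/-!
Evaluating the constancy condition at a point where `u j` does not vanish shows that
`u i ^ λ_j` and `u j ^ λ_i` are proportional, hence associated in the UFD `k[X, Y]`. So every
prime occurs in `u i` with multiplicity proportional to `λ_i`, i.e. with multiplicity
`(λ_i / ℓ) * g_p` where `g_p` is the gcd of these multiplicities; `U = ∏ p ^ g_p` then satisfies
`U ^ (λ_i / ℓ) ~ u i`, and units of `k[X, Y]` are constants. `U` is homogeneous because a factor
`f` of a nonzero homogeneous `f * g` of degree `m` is: in `f(tX) g(tX) = t ^ m (f g)(X)` both
factors are polynomials in `t` over a domain, so `f(tX)` is a single power of `t` times `f`.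
-/

open MvPolynomial

lemma Finset.eq_div_gcd_mul_gcd_of_mul_eq_mul {ι : Type*} {s : Finset ι} {lam c : ι → ℕ}
    (hℓ : s.gcd lam ≠ 0) (h : ∀ i ∈ s, ∀ j ∈ s, lam j * c i = lam i * c j) {i : ι} (hi : i ∈ s) :
    c i = lam i / s.gcd lam * s.gcd c := by
  have key : s.gcd lam * c i = s.gcd lam * (lam i / s.gcd lam * s.gcd c) :=
    calc s.gcd lam * c i = s.gcd fun j => c i * lam j := by
          rw [Finset.gcd_mul_left, normalize_eq, mul_comm]
      _ = s.gcd fun j => lam i * c j := Finset.gcd_congr rfl fun j hj => by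
          rw [mul_comm, h i hi j hj]
      _ = s.gcd lam * (lam i / s.gcd lam * s.gcd c) := by
          rw [Finset.gcd_mul_left, normalize_eq, ← mul_assoc,
            Nat.mul_div_cancel' (Finset.gcd_dvd hi)]
  exact Nat.eq_of_mul_eq_mul_left (Nat.pos_of_ne_zero hℓ) key

theorem UniqueFactorizationMonoid.exists_associated_pow_div_gcd {α ι : Type*}
    [CommMonoidWithZero α] [UniqueFactorizationMonoid α] {s : Finset ι} {x : ι → α}
    {lam : ι → ℕ} (hx : ∀ i ∈ s, x i ≠ 0) (hℓ : s.gcd lam ≠ 0)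
    (h : ∀ i ∈ s, ∀ j ∈ s, Associated (x i ^ lam j) (x j ^ lam i)) :
    ∃ U, ∀ i ∈ s, Associated (U ^ (lam i / s.gcd lam)) (x i) := by
  classical
  let _ := UniqueFactorizationMonoid.strongNormalizationMonoid (α := α)
  set F := fun i => normalizedFactors (x i)
  set d := fun i => lam i / s.gcd lam
  have hcount : ∀ p, ∀ i ∈ s, (F i).count p = d i * s.gcd fun j => (F j).count p :=
    fun p i hi => Finset.eq_div_gcd_mul_gcd_of_mul_eq_mul hℓ (fun i hi j hj => by
      simpa [F, normalizedFactors_pow, Multiset.count_nsmul] using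
        congrArg (Multiset.count p) (h i hi j hj).normalizedFactors_eq) hi
  obtain ⟨i₀, hi₀, hlam₀⟩ : ∃ i ∈ s, lam i ≠ 0 := by
    simpa [Finset.gcd_eq_zero_iff] using hℓ
  have hd₀ : d i₀ ≠ 0 := (Nat.div_pos (Nat.le_of_dvd (Nat.pos_of_ne_zero hlam₀)
    (Finset.gcd_dvd hi₀)) (Nat.pos_of_ne_zero hℓ)).ne'
  obtain ⟨G, hG⟩ := Multiset.exists_smul_of_dvd_count (F i₀) fun p _ =>
    Dvd.intro _ (hcount p i₀ hi₀).symm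
  have hGcount : ∀ p, G.count p = s.gcd fun j => (F j).count p := fun p =>
    Nat.eq_of_mul_eq_mul_left (Nat.pos_of_ne_zero hd₀) <| by
      rw [← Multiset.count_nsmul, ← hG, hcount p i₀ hi₀]
  refine ⟨G.prod, fun i hi => ?_⟩
  have hF : F i = d i • G := Multiset.ext' fun p => by
    rw [Multiset.count_nsmul, hGcount, hcount p i hi]
  rw [← Multiset.prod_nsmul, ← hF]
  exact prod_normalizedFactors (hx i hi)

namespace Polynomial

lemma coeff_eq_zero_of_mul_eq_C_mul_X_pow {R : Type*} [Semiring R] [NoZeroDivisors R]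
    {p q : R[X]} {c : R} {m j : ℕ} (hc : c ≠ 0) (h : p * q = C c * X ^ m)
    (hj : j ≠ p.natDegree) : p.coeff j = 0 := by
  have : Nontrivial R := ⟨⟨c, 0, hc⟩⟩
  have hpq : p * q ≠ 0 := by
    rw [h]; exact mul_ne_zero (C_ne_zero.2 hc) (pow_ne_zero _ X_ne_zero)
  have hp : p ≠ 0 := left_ne_zero_of_mul hpq
  have hq : q ≠ 0 := right_ne_zero_of_mul hpq
  have hdeg := natDegree_mul hp hq
  have htrail := natTrailingDegree_mul hp hq
  rw [h, natDegree_C_mul_X_pow _ _ hc] at hdeg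
  rw [h, natTrailingDegree_mul_X_pow (C_ne_zero.2 hc), natTrailingDegree_C, zero_add] at htrail
  have := natTrailingDegree_le_natDegree p
  have := natTrailingDegree_le_natDegree q
  rcases hj.lt_or_gt with hlt | hgt
  · exact coeff_eq_zero_of_lt_natTrailingDegree (by omega)
  · exact coeff_eq_zero_of_natDegree_lt hgt

end Polynomial

namespace MvPolynomial

variable {R σ : Type*}

section Expansion

variable [CommSemiring R]

/-- `f ↦ f(t • X)`, whose coefficient of `t ^ j` is the homogeneous component of degree `j`. -/
noncomputable def homogeneousExpansion : MvPolynomial σ R →ₐ[R] Polynomial (MvPolynomial σ R) :=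
  aeval fun i => Polynomial.C (X i) * Polynomial.X

lemma homogeneousExpansion_monomial (d : σ →₀ ℕ) (r : R) :
    homogeneousExpansion (monomial d r) =
      Polynomial.C (monomial d r) * Polynomial.X ^ d.degree := by
  classical
  rw [homogeneousExpansion, aeval_monomial, monomial_eq, Finsupp.prod, Finsupp.prod,
    Finsupp.degree_apply]
  simp only [mul_pow, Finset.prod_mul_distrib, Finset.prod_pow_eq_pow_sum, ← Polynomial.C_pow,
    ← map_prod, map_mul, Polynomial.algebraMap_apply, algebraMap_eq, mul_assoc]

lemma coeff_homogeneousExpansion (f : MvPolynomial σ R) (j : ℕ) :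
    (homogeneousExpansion f).coeff j = homogeneousComponent j f := by
  classical
  conv_lhs => rw [f.as_sum]
  rw [map_sum, Polynomial.finsetSum_coeff, homogeneousComponent_apply, Finset.sum_filter]
  refine Finset.sum_congr rfl fun d _ => ?_
  rw [homogeneousExpansion_monomial, Polynomial.coeff_C_mul, Polynomial.coeff_X_pow]
  split_ifs <;> simp_all [eq_comm]

lemma IsHomogeneous.homogeneousExpansion_eq {f : MvPolynomial σ R} {m : ℕ}
    (hf : f.IsHomogeneous m) : homogeneousExpansion f = Polynomial.C f * Polynomial.X ^ m := by
  ext1 j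
  rw [coeff_homogeneousExpansion, Polynomial.coeff_C_mul_X_pow,
    homogeneousComponent_of_mem (hf : f ∈ homogeneousSubmodule σ R m)]

end Expansion

lemma IsHomogeneous.exists_of_mul [CommSemiring R] [NoZeroDivisors R]
    {f g : MvPolynomial σ R} {m : ℕ} (h : (f * g).IsHomogeneous m) (hfg : f * g ≠ 0) :
    ∃ k, f.IsHomogeneous k := by
  have hE : homogeneousExpansion f * homogeneousExpansion g =
      Polynomial.C (f * g) * Polynomial.X ^ m := by
    rw [← map_mul, h.homogeneousExpansion_eq]
  refine ⟨(homogeneousExpansion f).natDegree, fun d hd => ?_⟩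
  by_contra hne
  change ¬ (Finsupp.weight fun _ => 1) d = _ at hne
  rw [← Finsupp.degree_eq_weight_one (R := ℕ)] at hne
  apply hd
  calc coeff d f = coeff d (homogeneousComponent d.degree f) := by
        rw [coeff_homogeneousComponent, if_pos rfl]
    _ = 0 := by
        rw [← coeff_homogeneousExpansion,
          Polynomial.coeff_eq_zero_of_mul_eq_C_mul_X_pow hfg hE hne, coeff_zero]

lemma IsHomogeneous.of_pow [CommSemiring R] [NoZeroDivisors R] {f : MvPolynomial σ R} {k d : ℕ}
    (hd : d ≠ 0) (h : (f ^ d).IsHomogeneous (k * d)) : f.IsHomogeneous k := by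
  rcases eq_or_ne f 0 with rfl | hf
  · exact isHomogeneous_zero _ _ _
  obtain ⟨e, he⟩ := IsHomogeneous.exists_of_mul (g := f ^ (d - 1))
    (by rwa [← pow_succ', Nat.sub_add_cancel (Nat.pos_of_ne_zero hd)])
    (by rw [← pow_succ']; exact pow_ne_zero _ hf)
  have hek : e * d = k * d := (he.pow d).inj_right h (pow_ne_zero _ hf)
  rwa [Nat.eq_of_mul_eq_mul_right (Nat.pos_of_ne_zero hd) hek] at he

lemma exists_eq_C_mul_of_associated [CommRing R] [IsReduced R] {f g : MvPolynomial σ R}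
    (h : Associated f g) : ∃ c, g = C c * f := by
  obtain ⟨w, rfl⟩ := h
  obtain ⟨c, -, hc⟩ := (isUnit_iff_eq_C_of_isReduced).1 w.isUnit
  exact ⟨c, by rw [hc, mul_comm]⟩

lemma funext_of_forall_ne_zero [CommRing R] [IsDomain R] [Infinite R] [Nonempty σ]
    {f g : MvPolynomial σ R} (h : ∀ x : σ → R, x ≠ 0 → eval x f = eval x g) : f = g := by
  obtain ⟨i⟩ := ‹Nonempty σ›
  -- `f * X i` and `g * X i` also agree at `0`
  refine mul_right_cancel₀ (X_ne_zero i) (MvPolynomial.funext fun x => ?_)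
  rcases eq_or_ne x 0 with rfl | hx
  · simp
  · simp [h x hx]

lemma associated_of_eval_mul_eq_eval_mul {K : Type*} [Field K] [Infinite K] [Nonempty σ]
    {f g : MvPolynomial σ K} (hf : f ≠ 0) (hg : g ≠ 0)
    (h : ∀ p q : σ → K, p ≠ 0 → q ≠ 0 → eval q g ≠ 0 →
      eval p f * eval q g = eval p g * eval q f) : Associated f g := by
  obtain ⟨q, hq, hgq⟩ : ∃ q : σ → K, q ≠ 0 ∧ eval q g ≠ 0 := by
    by_contra! H
    exact hg (funext_of_forall_ne_zero fun x hx => by simpa using H x hx)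
  have hfg : f * C (eval q g) = g * C (eval q f) :=
    funext_of_forall_ne_zero fun p hp => by simp [h p q hp hq hgq]
  have hfq : eval q f ≠ 0 := by
    rintro hfq
    rw [hfq, C_0, mul_zero] at hfg
    exact hf ((mul_eq_zero.1 hfg).resolve_right (C_ne_zero.2 hgq))
  exact (associated_mul_unit_right f _ ((IsUnit.mk0 _ hgq).map C)).trans
    (hfg ▸ (associated_mul_unit_right g _ ((IsUnit.mk0 _ hfq).map C)).symm)

end MvPolynomial

open scoped Classical in
theorem stmt1_general {k : Type*} [Field k] [IsAlgClosed k] (N n : ℕ)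
    (lam : Fin (N + 1) → ℕ) (hlam : ∀ i, 0 < lam i)
    (u : Fin (N + 1) → MvPolynomial (Fin 2) k)
    (hhom : ∀ i, (u i).IsHomogeneous (n * lam i))
    (hne : ∃ i, u i ≠ 0)
    (hconst : ∀ p q : Fin 2 → k, p ≠ 0 → q ≠ 0 →
      (∃ i, eval p (u i) ≠ 0) → (∃ i, eval q (u i) ≠ 0) →
      ∀ i j, eval p (u i) ^ lam j * eval q (u j) ^ lam i
        = eval p (u j) ^ lam i * eval q (u i) ^ lam j) :
    ∃ (a : Fin (N + 1) → k) (U : MvPolynomial (Fin 2) k),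
      U.IsHomogeneous ((Finset.univ.filter fun i => u i ≠ 0).gcd lam * n) ∧
      ∀ i, u i ≠ 0 →
        u i = C (a i) * U ^ (lam i / (Finset.univ.filter fun i => u i ≠ 0).gcd lam) := by
  set I := Finset.univ.filter fun i => u i ≠ 0
  have hmem : ∀ {i}, i ∈ I ↔ u i ≠ 0 := by simp [I]
  have hpair : ∀ i ∈ I, ∀ j ∈ I, Associated (u i ^ lam j) (u j ^ lam i) := by
    intro i hi j hj
    refine associated_of_eval_mul_eq_eval_mul (pow_ne_zero _ (hmem.1 hi))
      (pow_ne_zero _ (hmem.1 hj)) fun p q hp hq hqj => ?_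
    simp only [map_pow] at hqj ⊢
    by_cases hpu : ∃ i', eval p (u i') ≠ 0
    · exact hconst p q hp hq hpu ⟨j, ne_zero_pow (hlam i).ne' hqj⟩ i j
    · push Not at hpu
      simp [hpu, (hlam i).ne', (hlam j).ne']
  obtain ⟨i₀, hi₀⟩ := hne
  have hℓ : I.gcd lam ≠ 0 := fun h => (hlam i₀).ne' (Finset.gcd_eq_zero_iff.1 h i₀ (hmem.2 hi₀))
  obtain ⟨U, hU⟩ := UniqueFactorizationMonoid.exists_associated_pow_div_gcd
    (fun i hi => hmem.1 hi) hℓ hpair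
  choose! a ha using fun i hi => exists_eq_C_mul_of_associated (hU i hi)
  refine ⟨a, U, ?_, fun i hi => ha i (hmem.2 hi)⟩
  obtain ⟨b, hb⟩ := exists_eq_C_mul_of_associated (hU i₀ (hmem.2 hi₀)).symm
  have hlam₀ : I.gcd lam * (lam i₀ / I.gcd lam) = lam i₀ :=
    Nat.mul_div_cancel' (Finset.gcd_dvd (hmem.2 hi₀))
  have hd : lam i₀ / I.gcd lam ≠ 0 := fun h => (hlam i₀).ne' (by rw [← hlam₀, h, mul_zero])
  refine IsHomogeneous.of_pow hd ?_
  rw [hb, mul_right_comm, hlam₀, Nat.mul_comm (lam i₀)]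
  exact (hhom i₀).C_mul b

open scoped Classical in
/-- if the rational map `ℙ¹ ⇢ 𝒫(λ)` defined by a tuple of homogeneous
polynomials `u_i` of degrees `n·λ_i` is constant, then `u_i = a_i · U^(λ_i/ℓ)` for some
scalars `a_i` and a homogeneous polynomial `U` of degree `ℓ·n`, where
`ℓ = gcd(λ_i : u_i ≠ 0)`. -/
theorem stmt1 {k : Type*} [Field k] [IsAlgClosed k] (N n : ℕ) (hn : 0 < n)
    (lam : Fin (N + 1) → ℕ) (hlam : ∀ i, 0 < lam i)
    (u : Fin (N + 1) → MvPolynomial (Fin 2) k)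
    (hhom : ∀ i, (u i).IsHomogeneous (n * lam i))
    (hne : ∃ i, u i ≠ 0)
    (hconst : ∀ p q : Fin 2 → k, p ≠ 0 → q ≠ 0 →
      (∃ i, eval p (u i) ≠ 0) → (∃ i, eval q (u i) ≠ 0) →
      ∀ i j, eval p (u i) ^ lam j * eval q (u j) ^ lam i
        = eval p (u j) ^ lam i * eval q (u i) ^ lam j) :
    ∃ (a : Fin (N + 1) → k) (U : MvPolynomial (Fin 2) k),
      U.IsHomogeneous ((Finset.univ.filter fun i => u i ≠ 0).gcd lam * n) ∧
      ∀ i, u i ≠ 0 →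
        u i = C (a i) * U ^ (lam i / (Finset.univ.filter fun i => u i ≠ 0).gcd lam) :=
  stmt1_general N n lam hlam u hhom hne hconst
end

section
/- Fix positive integers n, λ_0, …, λ_N and a prime power q with gcd(q, λ_i) = 1 for all i. The weighted point count over F_q of the Hom stack Hom_n(P^1, P(λ)) (parameterizing tuples of degree n·λ_i homogeneous polynomials without common zero, modulo the weighted G_m-scaling) equals (1 + q + … + q^N)·(q^{|λ|n} − q^{|λ|n − N}), where |λ| = Σλ_i. -/
/-- Evaluation at `(x, y)` of the homogeneous polynomial of degree `d` (or zero) over a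
field `F` with coefficient vector `u`, in the algebraic closure of `F`. -/
noncomputable def homEval {F : Type*} [Field F] {d : ℕ} (u : Fin (d + 1) → F)
    (x y : AlgebraicClosure F) : AlgebraicClosure F :=
  ∑ j : Fin (d + 1), algebraMap F (AlgebraicClosure F) (u j) * x ^ (j : ℕ) * y ^ (d - (j : ℕ))

/-!
Dehomogenising at `y = 1`, a tuple of binary forms of degrees `d i` has a common zero on `ℙ¹`
exactly when all its top coefficients vanish (a zero at `∞`) or its polynomials are not coprime
(a root of their gcd in the algebraic closure).

Coprime tuples are counted through their complement. A nonzero tuple `f` of `m` polynomials of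
degrees `≤ e i` whose monic gcd `G = G' X + a` has positive degree corresponds to the pair
`(a, G' * (f / G))`, whose second entry runs over all nonzero tuples of degrees `< e i`. Hence
there are `q ^ (∑ e + m) - 1 - q (q ^ ∑ e - 1)` coprime tuples, and the tuples without common
zero are the coprime ones of degrees `≤ d i` minus those of degrees `< d i`.
-/

open Polynomial Finset

namespace Polynomial

section Semiring
variable {R : Type*} [Semiring R] {g h h' r : R[X]}

lemma natDegree_eq_natDegree_divX_add_one (hpos : 0 < g.natDegree) :
    g.natDegree = g.divX.natDegree + 1 := by
  rw [natDegree_divX_eq_natDegree_tsub_one]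
  omega

lemma Monic.monic_divX (hg : g.Monic) (hpos : 0 < g.natDegree) : g.divX.Monic := by
  have hcoeff : g.divX.coeff (g.natDegree - 1) = 1 := by
    rw [coeff_divX, Nat.sub_add_cancel hpos]
    exact hg
  show g.divX.coeff g.divX.natDegree = 1
  rwa [natDegree_divX_eq_natDegree_tsub_one]

lemma divX_mul_X_add_C (g : R[X]) (a : R) : (g * X + C a).divX = g := by
  ext n
  simp [coeff_divX]

lemma coeff_zero_mul_X_add_C (g : R[X]) (a : R) : (g * X + C a).coeff 0 = a := by
  simp

lemma Monic.mul_X_add_C (hg : g.Monic) (a : R) : (g * X + C a).Monic := by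
  nontriviality R
  refine (hg.mul monic_X).add_of_left (degree_C_le.trans_lt ?_)
  rw [degree_mul_X, degree_eq_natDegree hg.ne_zero]
  exact WithBot.coe_pos.mpr (Nat.succ_pos _)

lemma Monic.natDegree_mul_X_add_C [Nontrivial R] (hg : g.Monic) (a : R) :
    (g * X + C a).natDegree = g.natDegree + 1 := by
  rw [natDegree_add_C, hg.natDegree_mul monic_X, natDegree_X]

lemma Monic.not_isUnit_mul_X_add_C [Nontrivial R] (hg : g.Monic) (a : R) :
    ¬IsUnit (g * X + C a) := fun hu => by
  have hdeg := hg.natDegree_mul_X_add_C a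
  rw [(hg.mul_X_add_C a).isUnit_iff.mp hu, natDegree_one] at hdeg
  omega

lemma Monic.mul_mem_degreeLT_succ_iff (hh : h.Monic) (hh' : h'.Monic)
    (hdeg : h.natDegree = h'.natDegree + 1) {e : ℕ} :
    h * r ∈ degreeLT R (e + 1) ↔ h' * r ∈ degreeLT R e := by
  nontriviality R
  rcases eq_or_ne r 0 with rfl | hr
  · simp only [mul_zero, Submodule.zero_mem]
  rw [mem_degreeLT, mem_degreeLT, degree_eq_natDegree (hh.mul_right_ne_zero hr),
    degree_eq_natDegree (hh'.mul_right_ne_zero hr), hh.natDegree_mul' hr,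
    hh'.natDegree_mul' hr, hdeg]
  norm_cast
  omega

lemma mem_degreeLT_succ_and_coeff_eq_zero_iff {p : R[X]} {n : ℕ} :
    p ∈ degreeLT R (n + 1) ∧ p.coeff n = 0 ↔ p ∈ degreeLT R n := by
  simp only [mem_degreeLT, degree_lt_iff_coeff_zero]
  refine ⟨fun ⟨hp, hn⟩ m hm => ?_, fun hp => ⟨fun m hm => hp m (by omega), hp n le_rfl⟩⟩
  rcases hm.eq_or_lt with rfl | hlt
  · exact hn
  · exact hp m hlt

end Semiring

section Field
variable {F : Type*} [Field F] [DecidableEq F] {ι : Type*}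

lemma monic_gcd_of_ne_zero {s : Finset ι} {f : ι → F[X]} (hf : s.gcd f ≠ 0) :
    (s.gcd f).Monic := by
  simpa only [Finset.normalize_gcd] using monic_normalize hf

lemma gcd_mul_div_gcd {s : Finset ι} {f : ι → F[X]} (hf : s.gcd f ≠ 0) {h : F[X]}
    (hh : h.Monic) : s.gcd (fun i => h * (f i / s.gcd f)) = h := by
  obtain ⟨i, hi, hfi⟩ := Finset.gcd_ne_zero_iff.mp hf
  rw [Finset.gcd_mul_left, hh.normalize_eq_self, Finset.gcd_div_eq_one hi hfi, mul_one]

theorem exists_aeval_eq_zero_iff_not_isUnit_gcd (K : Type*) [Field K] [IsAlgClosed K]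
    [Algebra F K] (s : Finset ι) (f : ι → F[X]) :
    (∃ z : K, ∀ i ∈ s, aeval z (f i) = 0) ↔ ¬IsUnit (s.gcd f) := by
  constructor
  · rintro ⟨z, hz⟩ hunit
    exact minpoly.not_isUnit F z
      (isUnit_of_dvd_unit (Finset.dvd_gcd fun i hi => minpoly.dvd F z (hz i hi)) hunit)
  · intro hnu
    obtain ⟨z, hz⟩ := IsAlgClosed.exists_aeval_eq_zero K (s.gcd f)
      fun h => hnu (isUnit_iff_degree_eq_zero.mpr h)
    exact ⟨z, fun i hi => aeval_eq_zero_of_dvd_aeval_eq_zero (Finset.gcd_dvd hi) hz⟩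

end Field

end Polynomial

section Tuples
variable {F : Type*} [Field F] [DecidableEq F] {ι : Type*} [Fintype ι] {f : ι → F[X]}

noncomputable def replaceGcd (f : ι → F[X]) (h : F[X]) : ι → F[X] :=
  fun i => h * (f i / univ.gcd f)

lemma gcd_replaceGcd (hf : univ.gcd f ≠ 0) {h : F[X]} (hh : h.Monic) :
    univ.gcd (replaceGcd f h) = h :=
  gcd_mul_div_gcd hf hh

lemma replaceGcd_gcd (hf : univ.gcd f ≠ 0) : replaceGcd f (univ.gcd f) = f :=
  funext fun i => EuclideanDomain.mul_div_cancel' hf (Finset.gcd_dvd (mem_univ i))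

lemma replaceGcd_replaceGcd (hf : univ.gcd f ≠ 0) {h : F[X]} (hh : h.Monic) (h₂ : F[X]) :
    replaceGcd (replaceGcd f h) h₂ = replaceGcd f h₂ := by
  funext i
  show h₂ * (h * (f i / univ.gcd f) / univ.gcd (replaceGcd f h)) = h₂ * (f i / univ.gcd f)
  rw [gcd_replaceGcd hf hh, mul_div_cancel_left₀ _ hh.ne_zero]

lemma replaceGcd_divX_mem {e : ι → ℕ} (hf : ∀ i, f i ∈ degreeLT F (e i + 1))
    (hG : univ.gcd f ≠ 0) (hu : ¬IsUnit (univ.gcd f)) (i : ι) :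
    replaceGcd f (univ.gcd f).divX i ∈ degreeLT F (e i) := by
  have hM := monic_gcd_of_ne_zero hG
  have hpos := hM.natDegree_pos_of_not_isUnit hu
  refine (hM.mul_mem_degreeLT_succ_iff (hM.monic_divX hpos)
    (natDegree_eq_natDegree_divX_add_one hpos)).mp ?_
  rw [← replaceGcd, replaceGcd_gcd hG]
  exact hf i

lemma replaceGcd_mul_X_add_C_mem {e : ι → ℕ} (hf : ∀ i, f i ∈ degreeLT F (e i))
    (hG : univ.gcd f ≠ 0) (a : F) (i : ι) :
    replaceGcd f (univ.gcd f * X + C a) i ∈ degreeLT F (e i + 1) := by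
  have hM := monic_gcd_of_ne_zero hG
  refine ((hM.mul_X_add_C a).mul_mem_degreeLT_succ_iff hM (hM.natDegree_mul_X_add_C a)).mpr ?_
  rw [← replaceGcd, replaceGcd_gcd hG]
  exact hf i

noncomputable def nonunitGcdEquiv (e : ι → ℕ) :
    {f : ι → F[X] // (∀ i, f i ∈ degreeLT F (e i + 1)) ∧
        univ.gcd f ≠ 0 ∧ ¬IsUnit (univ.gcd f)} ≃
      F × {s : ι → F[X] // (∀ i, s i ∈ degreeLT F (e i)) ∧ univ.gcd s ≠ 0} where
  toFun f :=
    ((univ.gcd f.1).coeff 0,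
      ⟨replaceGcd f.1 (univ.gcd f.1).divX, replaceGcd_divX_mem f.2.1 f.2.2.1 f.2.2.2, by
        have hM := monic_gcd_of_ne_zero f.2.2.1
        have hM' := hM.monic_divX (hM.natDegree_pos_of_not_isUnit f.2.2.2)
        rw [gcd_replaceGcd f.2.2.1 hM']
        exact hM'.ne_zero⟩)
  invFun s :=
    ⟨replaceGcd s.2.1 (univ.gcd s.2.1 * X + C s.1),
      replaceGcd_mul_X_add_C_mem s.2.2.1 s.2.2.2 s.1, by
        have hM := monic_gcd_of_ne_zero s.2.2.2
        rw [gcd_replaceGcd s.2.2.2 (hM.mul_X_add_C s.1)]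
        exact ⟨(hM.mul_X_add_C s.1).ne_zero, hM.not_isUnit_mul_X_add_C s.1⟩⟩
  left_inv f := by
    have hM := monic_gcd_of_ne_zero f.2.2.1
    have hM' := hM.monic_divX (hM.natDegree_pos_of_not_isUnit f.2.2.2)
    refine Subtype.ext ?_
    dsimp only
    rw [gcd_replaceGcd f.2.2.1 hM', divX_mul_X_add, replaceGcd_replaceGcd f.2.2.1 hM',
      replaceGcd_gcd f.2.2.1]
  right_inv s := by
    have hH := (monic_gcd_of_ne_zero s.2.2.2).mul_X_add_C s.1
    refine Prod.ext ?_ (Subtype.ext ?_)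
    · dsimp only
      rw [gcd_replaceGcd s.2.2.2 hH, coeff_zero_mul_X_add_C]
    · dsimp only
      rw [gcd_replaceGcd s.2.2.2 hH, divX_mul_X_add_C, replaceGcd_replaceGcd s.2.2.2 hH,
        replaceGcd_gcd s.2.2.2]

lemma card_degreeLT_tuples_isUnit_gcd_coeff_eq_zero (d : ι → ℕ) :
    Nat.card {f : ι → F[X] // ((∀ i, f i ∈ degreeLT F (d i + 1)) ∧ IsUnit (univ.gcd f)) ∧
        ∀ i, (f i).coeff (d i) = 0} =
      Nat.card {f : ι → F[X] // (∀ i, f i ∈ degreeLT F (d i)) ∧ IsUnit (univ.gcd f)} :=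
  Nat.card_congr <| Equiv.subtypeEquivRight fun f => by
    rw [and_right_comm, ← forall_and]
    simp only [mem_degreeLT_succ_and_coeff_eq_zero_iff]

end Tuples

lemma Nat.card_subtype_eq_card_and_add_card_and_not {α : Type*} (P Q : α → Prop)
    [Finite (Subtype P)] :
    Nat.card {a // P a} = Nat.card {a // P a ∧ Q a} + Nat.card {a // P a ∧ ¬Q a} := by
  classical
  rw [← Nat.card_congr (Equiv.sumCompl fun a : {a // P a} => Q a), Nat.card_sum,
    Nat.card_congr (Equiv.subtypeSubtypeEquivSubtypeInter P Q),
    Nat.card_congr (Equiv.subtypeSubtypeEquivSubtypeInter P fun a => ¬Q a)]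

instance Subtype.finite_and {α : Type*} {P Q : α → Prop} [Finite (Subtype P)] :
    Finite {a // P a ∧ Q a} :=
  Finite.of_injective (fun a => (⟨a.1, a.2.1⟩ : {a // P a}))
    fun _ _ h => Subtype.ext (congrArg (fun a : {a // P a} => a.1) h)

section Counting
variable {F : Type*} [Field F] [Fintype F] {ι : Type*} [Fintype ι]

instance (e : ι → ℕ) : Finite {f : ι → F[X] // ∀ i, f i ∈ degreeLT F (e i)} :=
  have (n : ℕ) : Finite (degreeLT F n) := Finite.of_equiv _ (degreeLTEquiv F n).toEquiv.symm
  Finite.of_equiv _ Equiv.subtypePiEquivPi.symm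

lemma card_degreeLT_tuples (e : ι → ℕ) :
    Nat.card {f : ι → F[X] // ∀ i, f i ∈ degreeLT F (e i)} = Fintype.card F ^ ∑ i, e i := by
  rw [Nat.card_congr Equiv.subtypePiEquivPi, Nat.card_pi, ← Finset.prod_pow_eq_pow_sum]
  refine Finset.prod_congr rfl fun i _ => ?_
  rw [Nat.card_congr (degreeLTEquiv F _).toEquiv, Nat.card_fun, Nat.card_eq_fintype_card,
    Nat.card_eq_fintype_card, Fintype.card_fin]

variable [DecidableEq F]

lemma card_degreeLT_tuples_gcd_ne_zero (e : ι → ℕ) :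
    (Nat.card {f : ι → F[X] // (∀ i, f i ∈ degreeLT F (e i)) ∧ univ.gcd f ≠ 0} : ℤ) =
      Fintype.card F ^ ∑ i, e i - 1 := by
  have hzero :
      Nat.card {f : ι → F[X] // (∀ i, f i ∈ degreeLT F (e i)) ∧ univ.gcd f = 0} = 1 := by
    refine Nat.card_eq_one_iff_exists.mpr
      ⟨⟨0, fun i => zero_mem _, Finset.gcd_eq_zero_iff.mpr fun i _ => rfl⟩, fun f => ?_⟩
    exact Subtype.ext (funext fun i => Finset.gcd_eq_zero_iff.mp f.2.2 i (mem_univ i))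
  have hsplit := Nat.card_subtype_eq_card_and_add_card_and_not
    (fun f : ι → F[X] => ∀ i, f i ∈ degreeLT F (e i)) fun f => univ.gcd f = 0
  rw [card_degreeLT_tuples, hzero] at hsplit
  rw [← Nat.cast_pow, hsplit]
  push_cast
  ring

theorem card_degreeLT_tuples_isUnit_gcd (e : ι → ℕ) :
    (Nat.card {f : ι → F[X] // (∀ i, f i ∈ degreeLT F (e i + 1)) ∧ IsUnit (univ.gcd f)} : ℤ) =
      Fintype.card F ^ (∑ i, e i + Fintype.card ι) - 1
        - Fintype.card F * (Fintype.card F ^ ∑ i, e i - 1) := by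
  have hsplit : Nat.card {f : ι → F[X] // (∀ i, f i ∈ degreeLT F (e i + 1)) ∧ univ.gcd f ≠ 0} =
      Nat.card {f : ι → F[X] // ((∀ i, f i ∈ degreeLT F (e i + 1)) ∧ univ.gcd f ≠ 0) ∧
        IsUnit (univ.gcd f)} +
      Nat.card {f : ι → F[X] // ((∀ i, f i ∈ degreeLT F (e i + 1)) ∧ univ.gcd f ≠ 0) ∧
        ¬IsUnit (univ.gcd f)} :=
    Nat.card_subtype_eq_card_and_add_card_and_not _ _
  have hunit : Nat.card {f : ι → F[X] // ((∀ i, f i ∈ degreeLT F (e i + 1)) ∧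
      univ.gcd f ≠ 0) ∧ IsUnit (univ.gcd f)} =
      Nat.card {f : ι → F[X] // (∀ i, f i ∈ degreeLT F (e i + 1)) ∧ IsUnit (univ.gcd f)} :=
    Nat.card_congr <| Equiv.subtypeEquivRight fun f =>
      ⟨fun h => ⟨h.1.1, h.2⟩, fun h => ⟨⟨h.1, h.2.ne_zero⟩, h.2⟩⟩
  have hnonunit : Nat.card {f : ι → F[X] // ((∀ i, f i ∈ degreeLT F (e i + 1)) ∧
      univ.gcd f ≠ 0) ∧ ¬IsUnit (univ.gcd f)} = Fintype.card F *
      Nat.card {s : ι → F[X] // (∀ i, s i ∈ degreeLT F (e i)) ∧ univ.gcd s ≠ 0} := by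
    rw [Nat.card_congr (Equiv.subtypeEquivRight fun f => and_assoc),
      Nat.card_congr (nonunitGcdEquiv e), Nat.card_prod, Nat.card_eq_fintype_card]
  have hsum : ∑ i, (e i + 1) = ∑ i, e i + Fintype.card ι := by
    simp [Finset.sum_add_distrib]
  have hall := card_degreeLT_tuples_gcd_ne_zero (F := F) fun i => e i + 1
  rw [hsplit, hunit, hnonunit, hsum] at hall
  push_cast at hall
  linear_combination hall - Fintype.card F * card_degreeLT_tuples_gcd_ne_zero (F := F) e

end Counting

section HomogeneousEvaluation
variable {F : Type*} [Field F]

noncomputable def polyOfCoeffs {n : ℕ} (u : Fin n → F) : F[X] :=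
  (degreeLTEquiv F n).symm u

lemma polyOfCoeffs_mem {n : ℕ} (u : Fin n → F) : polyOfCoeffs u ∈ degreeLT F n :=
  ((degreeLTEquiv F n).symm u).2

lemma coeff_polyOfCoeffs {n : ℕ} (u : Fin n → F) (j : Fin n) :
    (polyOfCoeffs u).coeff j = u j :=
  congrFun ((degreeLTEquiv F n).apply_symm_apply u) j

lemma coeff_polyOfCoeffs_last {n : ℕ} (u : Fin (n + 1) → F) :
    (polyOfCoeffs u).coeff n = u (Fin.last n) :=
  coeff_polyOfCoeffs u (Fin.last n)

lemma homEval_zero_right {d : ℕ} (u : Fin (d + 1) → F) (x : AlgebraicClosure F) :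
    homEval u x 0 = algebraMap F (AlgebraicClosure F) (u (Fin.last d)) * x ^ d := by
  rw [homEval, Fin.sum_univ_castSucc, Finset.sum_eq_zero fun j _ => ?_]
  · simp
  · simp [zero_pow (Nat.sub_ne_zero_of_lt j.isLt)]

lemma homEval_eq_pow_mul_aeval {d : ℕ} (u : Fin (d + 1) → F) (x : AlgebraicClosure F)
    {y : AlgebraicClosure F} (hy : y ≠ 0) :
    homEval u x y = y ^ d * aeval (x / y) (polyOfCoeffs u) := by
  have hdeg : (polyOfCoeffs u).natDegree < d + 1 :=
    Nat.lt_succ_of_le (natDegree_le_of_degree_le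
      (mem_degreeLE.mp (degreeLT_succ_eq_degreeLE (R := F) ▸ polyOfCoeffs_mem u)))
  rw [homEval, aeval_eq_sum_range' hdeg, Finset.mul_sum, ← Fin.sum_univ_eq_sum_range]
  refine Finset.sum_congr rfl fun j _ => ?_
  rw [Algebra.smul_def, div_pow, ← pow_sub_mul_pow y (Nat.lt_succ_iff.mp j.isLt),
    coeff_polyOfCoeffs]
  field_simp

variable {ι : Type*}

noncomputable def coeffsEquiv (d : ι → ℕ) :
    (Π i, Fin (d i) → F) ≃ {f : ι → F[X] // ∀ i, f i ∈ degreeLT F (d i)} :=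
  (Equiv.piCongrRight fun i => (degreeLTEquiv F (d i)).toEquiv.symm).trans
    Equiv.subtypePiEquivPi.symm

lemma coe_coeffsEquiv (d : ι → ℕ) (u : Π i, Fin (d i) → F) :
    (coeffsEquiv d u : ι → F[X]) = fun i => polyOfCoeffs (u i) :=
  rfl

variable [DecidableEq F] [Fintype ι] {d : ι → ℕ}

theorem exists_homEval_eq_zero_iff (u : Π i, Fin (d i + 1) → F) :
    (∃ x y : AlgebraicClosure F, ¬(x = 0 ∧ y = 0) ∧ ∀ i, homEval (u i) x y = 0) ↔
      (∀ i, u i (Fin.last (d i)) = 0) ∨ ¬IsUnit (univ.gcd fun i => polyOfCoeffs (u i)) := by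
  rw [← exists_aeval_eq_zero_iff_not_isUnit_gcd (AlgebraicClosure F)]
  constructor
  · rintro ⟨x, y, hxy, hzero⟩
    by_cases hy : y = 0
    · subst hy
      have hx : x ≠ 0 := fun hx => hxy ⟨hx, rfl⟩
      refine Or.inl fun i => ?_
      simpa [homEval_zero_right, hx] using hzero i
    · refine Or.inr ⟨x / y, fun i _ => ?_⟩
      have h := hzero i
      rw [homEval_eq_pow_mul_aeval _ _ hy] at h
      exact (mul_eq_zero.mp h).resolve_left (pow_ne_zero _ hy)
  · rintro (htop | ⟨z, hz⟩)
    · exact ⟨1, 0, by simp, fun i => by rw [homEval_zero_right, htop i, map_zero, zero_mul]⟩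
    · exact ⟨z, 1, by simp, fun i => by
        rw [homEval_eq_pow_mul_aeval _ _ one_ne_zero, div_one, hz i (mem_univ i), mul_zero]⟩

lemma card_not_exists_homEval_eq_zero_eq_card_degreeLT_tuples (d : ι → ℕ) :
    Nat.card {u : Π i, Fin (d i + 1) → F //
        ¬∃ x y : AlgebraicClosure F, ¬(x = 0 ∧ y = 0) ∧ ∀ i, homEval (u i) x y = 0} =
      Nat.card {f : ι → F[X] // ((∀ i, f i ∈ degreeLT F (d i + 1)) ∧ IsUnit (univ.gcd f)) ∧
        ¬∀ i, (f i).coeff (d i) = 0} := by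
  refine Nat.card_congr ((Equiv.subtypeEquiv (coeffsEquiv fun i => d i + 1) fun u => ?_).trans
    (Equiv.subtypeSubtypeEquivSubtypeInter _ fun f => IsUnit (univ.gcd f) ∧
      ¬∀ i, (f i).coeff (d i) = 0) |>.trans (Equiv.subtypeEquivRight fun f => and_assoc.symm))
  rw [exists_homEval_eq_zero_iff, coe_coeffsEquiv, not_or, not_not, and_comm]
  simp only [coeff_polyOfCoeffs_last]

end HomogeneousEvaluation

section PointCount
variable {F : Type*} [Field F] [Fintype F] [DecidableEq F] {ι : Type*} [Fintype ι]

theorem card_not_exists_homEval_eq_zero (d : ι → ℕ) (hd : ∀ i, 0 < d i) :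
    (Nat.card {u : Π i, Fin (d i + 1) → F //
        ¬∃ x y : AlgebraicClosure F, ¬(x = 0 ∧ y = 0) ∧ ∀ i, homEval (u i) x y = 0} : ℤ) =
      (Fintype.card F ^ Fintype.card ι - 1) *
        (Fintype.card F ^ ∑ i, d i - Fintype.card F ^ (∑ i, d i + 1 - Fintype.card ι)) := by
  have hsplit :
      Nat.card {f : ι → F[X] // (∀ i, f i ∈ degreeLT F (d i + 1)) ∧ IsUnit (univ.gcd f)} =
        Nat.card {f : ι → F[X] // ((∀ i, f i ∈ degreeLT F (d i + 1)) ∧ IsUnit (univ.gcd f)) ∧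
          ∀ i, (f i).coeff (d i) = 0} +
        Nat.card {f : ι → F[X] // ((∀ i, f i ∈ degreeLT F (d i + 1)) ∧ IsUnit (univ.gcd f)) ∧
          ¬∀ i, (f i).coeff (d i) = 0} :=
    Nat.card_subtype_eq_card_and_add_card_and_not _ _
  have hall := card_degreeLT_tuples_isUnit_gcd (F := F) d
  rw [hsplit, card_degreeLT_tuples_isUnit_gcd_coeff_eq_zero,
    ← card_not_exists_homEval_eq_zero_eq_card_degreeLT_tuples] at hall
  obtain ⟨c, rfl⟩ : ∃ c : ι → ℕ, d = fun i => c i + 1 :=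
    ⟨fun i => d i - 1, funext fun i => (Nat.sub_add_cancel (hd i)).symm⟩
  have hsum : ∑ i, (c i + 1) = ∑ i, c i + Fintype.card ι := by
    simp [Finset.sum_add_distrib]
  have hexp : ∑ i, c i + Fintype.card ι + 1 - Fintype.card ι = ∑ i, c i + 1 := by omega
  simp only [hsum, hexp] at hall ⊢
  push_cast at hall
  linear_combination hall - card_degreeLT_tuples_isUnit_gcd (F := F) c

end PointCount

theorem stmt12_general {F : Type*} [Field F] [Fintype F] (N n : ℕ) (hn : 1 ≤ n)
    (lam : Fin (N + 1) → ℕ) (hlam : ∀ i, 0 < lam i) :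
    Nat.card {u : (i : Fin (N + 1)) → (Fin (n * lam i + 1) → F) //
        ¬ ∃ x y : AlgebraicClosure F, ¬ (x = 0 ∧ y = 0) ∧ ∀ i, homEval (u i) x y = 0}
    = Nat.card Fˣ *
      ((∑ i ∈ Finset.range (N + 1), Fintype.card F ^ i) *
        (Fintype.card F ^ ((∑ i, lam i) * n) - Fintype.card F ^ ((∑ i, lam i) * n - N))) := by
  classical
  have hcount := card_not_exists_homEval_eq_zero (F := F) (fun i => n * lam i)
    fun i => Nat.mul_pos hn (hlam i)
  have hsum : ∑ i, n * lam i = (∑ i, lam i) * n := by rw [← Finset.mul_sum, mul_comm]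
  rw [Fintype.card_fin, hsum, Nat.add_sub_add_right] at hcount
  have hq : 1 ≤ Fintype.card F := Fintype.card_pos
  have hle : Fintype.card F ^ ((∑ i, lam i) * n - N) ≤ Fintype.card F ^ ((∑ i, lam i) * n) :=
    Nat.pow_le_pow_right hq (Nat.sub_le _ _)
  rw [Nat.card_eq_fintype_card (α := Fˣ), Fintype.card_units]
  zify [hq, hle]
  rw [hcount, ← geom_sum_mul]
  ring

/-- the weighted point count over `F_q` of `Hom_n(ℙ¹, 𝒫(λ))` equals
`(1 + q + ⋯ + q^N)·(q^{|λ|n} − q^{|λ|n−N})`. The weighted point count of this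
`G_m`-quotient is the count of the affine cone (tuples of degree `n·λ_i` homogeneous
polynomials with no common zero) divided by `q − 1 = #Fˣ`; we state this after clearing
the denominator. -/
theorem stmt12 {F : Type*} [Field F] [Fintype F] (N n : ℕ) (hn : 1 ≤ n)
    (lam : Fin (N + 1) → ℕ) (hlam : ∀ i, 0 < lam i)
    (hcop : ∀ i, Nat.Coprime (Fintype.card F) (lam i)) :
    Nat.card {u : (i : Fin (N + 1)) → (Fin (n * lam i + 1) → F) //
        ¬ ∃ x y : AlgebraicClosure F, ¬ (x = 0 ∧ y = 0) ∧ ∀ i, homEval (u i) x y = 0}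
    = Nat.card Fˣ *
      ((∑ i ∈ Finset.range (N + 1), Fintype.card F ^ i) *
        (Fintype.card F ^ ((∑ i, lam i) * n) - Fintype.card F ^ ((∑ i, lam i) * n - N))) :=
  stmt12_general N n hn lam hlam
end
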